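/- arXiv:1405.5589 — 3 statements merged into one kernel-verified Lean document; each statement's English description precedes it below -/
import Mathlib

section
/- Let p ∈ [1,∞) with p ≠ 2 and let n ∈ ℕ. If an n×n complex matrix A is an isometry of ℓ^p_n (i.e., ‖Ax‖_p = ‖x‖_p for all x ∈ ℂ^n), then A is a complex permutation matrix: every entry of A is either zero or of modulus one, and each row and each column has exactly one nonzero entry. -/
/-!
Let `A` be an isometry of `ℓ^p_n` with `p ≠ 2`. Testing it on `e_j` shows that every column has
`ℓ^p`-norm one, and testing it on `e_j ± e_k` shows that for distinct columns `u, v`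
`∑ (|uᵢ + vᵢ|^p + |uᵢ - vᵢ|^p) = 2 ∑ (|uᵢ|^p + |vᵢ|^p)`.
By the parallelogram law together with convexity and strict superadditivity of `s ↦ s^(p/2)`
(concavity and strict subadditivity when `p < 2`), each summand on the left is on the same side
of the corresponding one on the right, strictly so unless `uᵢ vᵢ = 0`. Hence distinct columns have
disjoint supports, and the positions of the nonzero entries of a square matrix whose columns are
nonzero with pairwise disjoint supports form the graph of a permutation.
-/

open Finset

namespace Real

variable {t x y : ℝ}

lemma rpow_eq_rpow_mul_div_rpow {z s : ℝ} (hz : 0 ≤ z) (hs : 0 < s) :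
    z ^ t = s ^ t * (z / s) ^ t := by
  rw [← mul_rpow hs.le (by positivity), mul_div_cancel₀ _ hs.ne']

lemma add_rpow_lt_rpow_add (ht : 1 < t) (hx : 0 < x) (hy : 0 < y) :
    x ^ t + y ^ t < (x + y) ^ t := by
  have hs : 0 < x + y := by positivity
  have hlt : ∀ z, 0 < z → z < x + y → z ^ t < (x + y) ^ t * (z / (x + y)) := fun z hz hzs => by
    rw [rpow_eq_rpow_mul_div_rpow hz.le hs]
    gcongr
    exact rpow_lt_self_of_lt_one (by positivity) ((div_lt_one hs).2 hzs) ht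
  calc x ^ t + y ^ t < (x + y) ^ t * (x / (x + y)) + (x + y) ^ t * (y / (x + y)) :=
        add_lt_add (hlt x hx (by linarith)) (hlt y hy (by linarith))
    _ = (x + y) ^ t := by field_simp

lemma rpow_add_lt_add_rpow (ht : t < 1) (hx : 0 < x) (hy : 0 < y) :
    (x + y) ^ t < x ^ t + y ^ t := by
  have hs : 0 < x + y := by positivity
  have hlt : ∀ z, 0 < z → z < x + y → (x + y) ^ t * (z / (x + y)) < z ^ t := fun z hz hzs => by
    rw [rpow_eq_rpow_mul_div_rpow hz.le hs]
    gcongr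
    exact self_lt_rpow_of_lt_one (by positivity) ((div_lt_one hs).2 hzs) ht
  calc (x + y) ^ t = (x + y) ^ t * (x / (x + y)) + (x + y) ^ t * (y / (x + y)) := by field_simp
    _ < x ^ t + y ^ t := add_lt_add (hlt x hx (by linarith)) (hlt y hy (by linarith))

lemma rpow_eq_sq_rpow_div_two (hx : 0 ≤ x) : x ^ t = (x ^ 2) ^ (t / 2) := by
  rw [← rpow_natCast, ← rpow_mul hx, Nat.cast_ofNat, mul_div_cancel₀ _ two_ne_zero]

end Real

section Clarkson

variable {E : Type*} [NormedAddCommGroup E] {p : ℝ}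

lemma norm_add_rpow_add_norm_sub_rpow_of_eq_zero_or_eq_zero (hp : p ≠ 0) {x y : E}
    (h : x = 0 ∨ y = 0) : ‖x + y‖ ^ p + ‖x - y‖ ^ p = 2 * (‖x‖ ^ p + ‖y‖ ^ p) := by
  rcases h with rfl | rfl <;> simp [Real.zero_rpow hp] <;> ring

variable [InnerProductSpace ℝ E]

lemma two_mul_add_rpow_lt_norm_add_rpow_add_norm_sub_rpow (hp : 2 < p) {x y : E}
    (hx : x ≠ 0) (hy : y ≠ 0) :
    2 * (‖x‖ ^ p + ‖y‖ ^ p) < ‖x + y‖ ^ p + ‖x - y‖ ^ p := by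
  have hconv := (convexOn_rpow (p := p / 2) (by linarith)).2 (Set.mem_Ici.2 (sq_nonneg ‖x + y‖))
    (Set.mem_Ici.2 (sq_nonneg ‖x - y‖)) (by norm_num : (0 : ℝ) ≤ 1 / 2)
    (by norm_num : (0 : ℝ) ≤ 1 / 2) (by norm_num)
  simp only [smul_eq_mul] at hconv
  simp only [Real.rpow_eq_sq_rpow_div_two (t := p) (norm_nonneg _)]
  calc 2 * ((‖x‖ ^ 2) ^ (p / 2) + (‖y‖ ^ 2) ^ (p / 2))
      < 2 * (‖x‖ ^ 2 + ‖y‖ ^ 2) ^ (p / 2) := by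
        gcongr
        exact Real.add_rpow_lt_rpow_add (by linarith) (by positivity [norm_pos_iff.2 hx])
          (by positivity [norm_pos_iff.2 hy])
    _ = 2 * (1 / 2 * ‖x + y‖ ^ 2 + 1 / 2 * ‖x - y‖ ^ 2) ^ (p / 2) := by
        rw [← mul_add, parallelogram_law_with_norm ℝ x y]
        ring_nf
    _ ≤ (‖x + y‖ ^ 2) ^ (p / 2) + (‖x - y‖ ^ 2) ^ (p / 2) := by linarith

lemma norm_add_rpow_add_norm_sub_rpow_lt_two_mul_add_rpow (hp₀ : 0 < p) (hp : p < 2) {x y : E}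
    (hx : x ≠ 0) (hy : y ≠ 0) :
    ‖x + y‖ ^ p + ‖x - y‖ ^ p < 2 * (‖x‖ ^ p + ‖y‖ ^ p) := by
  have hconc := (Real.concaveOn_rpow (p := p / 2) (by linarith) (by linarith)).2
    (Set.mem_Ici.2 (sq_nonneg ‖x + y‖)) (Set.mem_Ici.2 (sq_nonneg ‖x - y‖))
    (by norm_num : (0 : ℝ) ≤ 1 / 2) (by norm_num : (0 : ℝ) ≤ 1 / 2) (by norm_num)
  simp only [smul_eq_mul] at hconc
  simp only [Real.rpow_eq_sq_rpow_div_two (t := p) (norm_nonneg _)]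
  calc (‖x + y‖ ^ 2) ^ (p / 2) + (‖x - y‖ ^ 2) ^ (p / 2)
      ≤ 2 * (1 / 2 * ‖x + y‖ ^ 2 + 1 / 2 * ‖x - y‖ ^ 2) ^ (p / 2) := by linarith
    _ = 2 * (‖x‖ ^ 2 + ‖y‖ ^ 2) ^ (p / 2) := by
        rw [← mul_add, parallelogram_law_with_norm ℝ x y]
        ring_nf
    _ < 2 * ((‖x‖ ^ 2) ^ (p / 2) + (‖y‖ ^ 2) ^ (p / 2)) := by
        gcongr
        exact Real.rpow_add_lt_add_rpow (by linarith) (by positivity [norm_pos_iff.2 hx])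
          (by positivity [norm_pos_iff.2 hy])

theorem eq_zero_or_eq_zero_of_sum_norm_add_rpow_add_norm_sub_rpow_eq {ι : Type*} [Fintype ι]
    (hp₀ : 0 < p) (hp : p ≠ 2) {u v : ι → E}
    (h : ∑ i, (‖u i + v i‖ ^ p + ‖u i - v i‖ ^ p) = ∑ i, 2 * (‖u i‖ ^ p + ‖v i‖ ^ p)) (i : ι) :
    u i = 0 ∨ v i = 0 := by
  by_contra! hi
  rcases hp.lt_or_gt with hlt | hgt
  · refine (sum_lt_sum (fun m _ => ?_) ⟨i, mem_univ i,
      norm_add_rpow_add_norm_sub_rpow_lt_two_mul_add_rpow hp₀ hlt hi.1 hi.2⟩).ne h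
    by_cases hm : u m = 0 ∨ v m = 0
    · exact (norm_add_rpow_add_norm_sub_rpow_of_eq_zero_or_eq_zero hp₀.ne' hm).le
    · obtain ⟨hu, hv⟩ := not_or.1 hm
      exact (norm_add_rpow_add_norm_sub_rpow_lt_two_mul_add_rpow hp₀ hlt hu hv).le
  · refine (sum_lt_sum (fun m _ => ?_) ⟨i, mem_univ i,
      two_mul_add_rpow_lt_norm_add_rpow_add_norm_sub_rpow hgt hi.1 hi.2⟩).ne' h
    by_cases hm : u m = 0 ∨ v m = 0
    · exact (norm_add_rpow_add_norm_sub_rpow_of_eq_zero_or_eq_zero hp₀.ne' hm).ge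
    · obtain ⟨hu, hv⟩ := not_or.1 hm
      exact (two_mul_add_rpow_lt_norm_add_rpow_add_norm_sub_rpow hgt hu hv).le

end Clarkson

namespace Matrix

theorem exists_perm_ne_zero_iff_of_disjoint_cols {ι R : Type*} [Finite ι] [Zero R]
    {A : Matrix ι ι R} (hcol : ∀ j, ∃ i, A i j ≠ 0)
    (hdisj : ∀ i {j k}, j ≠ k → A i j = 0 ∨ A i k = 0) :
    ∃ σ : Equiv.Perm ι, ∀ i j, A i j ≠ 0 ↔ j = σ i := by
  choose r hr using hcol
  have hr_inj : Function.Injective r := fun j k hjk => by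
    by_contra hne
    exact (hdisj (r j) hne).elim (hr j) (hjk ▸ hr k)
  let e := Equiv.ofBijective r (Finite.injective_iff_bijective.1 hr_inj)
  have hr_symm : ∀ i, A i (e.symm i) ≠ 0 := fun i => by
    simpa only [e, Equiv.ofBijective_apply_symm_apply] using hr (e.symm i)
  refine ⟨e.symm, fun i j => ⟨fun hij => ?_, fun h => h ▸ hr_symm i⟩⟩
  by_contra hne
  exact (hdisj i hne).elim hij (hr_symm i)

section Isometry

variable {m n : Type*} [Fintype m] [Fintype n] [DecidableEq n] {p : ℝ} {A : Matrix m n ℂ}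

lemma sum_norm_rpow_col_eq_one (hp : p ≠ 0) (hA : ∀ x, ∑ i, ‖(A *ᵥ x) i‖ ^ p = ∑ j, ‖x j‖ ^ p)
    (j : n) : ∑ i, ‖A i j‖ ^ p = 1 := by
  have h := hA (Pi.single j 1)
  rw [sum_eq_single j (fun l _ hl => by simp [hl, Real.zero_rpow hp]) (by simp)] at h
  simpa [mulVec_single] using h

lemma sum_norm_rpow_col_add_mul_col_eq_two (hp : p ≠ 0)
    (hA : ∀ x, ∑ i, ‖(A *ᵥ x) i‖ ^ p = ∑ j, ‖x j‖ ^ p) {j k : n} (hjk : j ≠ k) {c : ℂ}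
    (hc : ‖c‖ = 1) : ∑ i, ‖A i j + c * A i k‖ ^ p = 2 := by
  have h := hA (Pi.single j 1 + Pi.single k c)
  rw [sum_eq_add j k hjk (fun l _ hl => by simp [hl.1, hl.2, Real.zero_rpow hp]) (by simp)
    (by simp)] at h
  simpa [mulVec_add, mulVec_single, hjk, hjk.symm, hc, mul_comm, one_add_one_eq_two] using h

lemma eq_zero_or_eq_zero_of_ne_of_isometry (hp₀ : 0 < p) (hp : p ≠ 2)
    (hA : ∀ x, ∑ i, ‖(A *ᵥ x) i‖ ^ p = ∑ j, ‖x j‖ ^ p) {j k : n} (hjk : j ≠ k) (i : m) :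
    A i j = 0 ∨ A i k = 0 := by
  refine eq_zero_or_eq_zero_of_sum_norm_add_rpow_add_norm_sub_rpow_eq hp₀ hp
    (u := fun i => A i j) (v := fun i => A i k) ?_ i
  have hadd := sum_norm_rpow_col_add_mul_col_eq_two hp₀.ne' hA hjk (c := 1) (by simp)
  have hsub := sum_norm_rpow_col_add_mul_col_eq_two hp₀.ne' hA hjk (c := -1) (by simp)
  simp only [one_mul] at hadd
  simp only [neg_one_mul, ← sub_eq_add_neg] at hsub
  rw [sum_add_distrib, ← mul_sum, sum_add_distrib, hadd, hsub,
    sum_norm_rpow_col_eq_one hp₀.ne' hA, sum_norm_rpow_col_eq_one hp₀.ne' hA]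
  norm_num

end Isometry

end Matrix

/-- For `p ∈ [1,∞)`, `p ≠ 2`, every matrix which is an isometry of `ℓ^p_n`
is a complex permutation matrix. -/
theorem isometry_lp_is_complex_permutation
    (p : ℝ) (hp1 : 1 ≤ p) (hp2 : p ≠ 2) (n : ℕ)
    (A : Matrix (Fin n) (Fin n) ℂ)
    (hiso : ∀ x : Fin n → ℂ,
      (∑ i, ‖A.mulVec x i‖ ^ p) ^ (1 / p) = (∑ i, ‖x i‖ ^ p) ^ (1 / p)) :
    ∃ (σ : Equiv.Perm (Fin n)) (lam : Fin n → ℂ),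
      (∀ i, ‖lam i‖ = 1) ∧
      (∀ i j, A i j = if j = σ i then lam i else 0) := by
  have hp₀ : 0 < p := by linarith
  have hA : ∀ x, ∑ i, ‖A.mulVec x i‖ ^ p = ∑ j, ‖x j‖ ^ p := fun x =>
    (Real.rpow_left_inj (by positivity) (by positivity) (by positivity)).1 (hiso x)
  have hcol := Matrix.sum_norm_rpow_col_eq_one hp₀.ne' hA
  obtain ⟨σ, hσ⟩ := Matrix.exists_perm_ne_zero_iff_of_disjoint_cols
    (fun j => by
      by_contra! h
      simpa [h, Real.zero_rpow hp₀.ne'] using hcol j)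
    (fun i _ _ hjk => Matrix.eq_zero_or_eq_zero_of_ne_of_isometry hp₀ hp2 hA hjk i)
  have hzero : ∀ i j, j ≠ σ i → A i j = 0 := fun i j hj => not_not.1 (mt (hσ i j).1 hj)
  refine ⟨σ, fun i => A i (σ i), fun i => ?_, fun i j => ?_⟩
  · have h : ‖A i (σ i)‖ ^ p = 1 ^ p := by
      rw [Real.one_rpow, ← hcol (σ i), sum_eq_single i (fun l _ hl => by
        rw [hzero l (σ i) (σ.injective.ne hl).symm, norm_zero, Real.zero_rpow hp₀.ne']) (by simp)]
    exact (Real.rpow_left_inj (norm_nonneg _) zero_le_one hp₀.ne').1 h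
  · split_ifs with h
    · rw [h]
    · exact hzero i j h
end

section
/- Let (Y,ν) be a σ-finite measure space, let S : Y → Y be a measurable map, let p ∈ [1,∞), let n ∈ ℕ, and let E ⊆ Y be a measurable set with 0 < ν(E) < ∞ such that the sets E, S⁻¹(E), …, S^{-(n-1)}(E) are pairwise disjoint. Then the linear map ψ_E : ℓ^p_n → L^p(Y,ν) defined by ψ_E(η) = ν(E)^{-1/p} ∑_{j=0}^{n-1} η_j · u_S^j(𝟙_E) is an isometry. -/
open MeasureTheory
open scoped ENNReal

/-!
Since `u_S` is an isometry, each `u_S^j 𝟙_E` has norm `ν(E)^{1/p}`; since `u_S` multiplies by a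
weight and composes with `S⁻¹`, which preserves null sets, `u_S^j 𝟙_E` vanishes a.e. off `S^j(E)`.
These sets are pairwise disjoint, and for functions with disjoint supports the `p`-th power of the
`L^p` norm is additive, so `‖∑ η_j u_S^j 𝟙_E‖^p = ∑ |η_j|^p ν(E)`.
-/

open Function Set

theorem Finset.apply_sum_of_pairwise_eq_zero {ι M N : Type*} [AddCommMonoid M] [AddCommMonoid N]
    {g : M → N} (hg : g 0 = 0) {s : Finset ι} {f : ι → M}
    (hf : ∀ i ∈ s, ∀ j ∈ s, f i ≠ 0 → f j ≠ 0 → i = j) :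
    g (∑ i ∈ s, f i) = ∑ i ∈ s, g (f i) := by
  by_cases h : ∃ i ∈ s, f i ≠ 0
  · obtain ⟨i, hi, hfi⟩ := h
    have hzero : ∀ j ∈ s, j ≠ i → f j = 0 := fun j hj hji ↦
      by_contra fun hfj ↦ hji (hf j hj i hi hfj hfi)
    rw [Finset.sum_eq_single_of_mem i hi hzero,
      Finset.sum_eq_single_of_mem i hi fun j hj hji ↦ by rw [hzero j hj hji, hg]]
  · push Not at h
    rw [Finset.sum_eq_zero h, Finset.sum_eq_zero fun i hi ↦ by rw [h i hi, hg], hg]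

namespace MeasureTheory

variable {α ι E : Type*} [MeasurableSpace α] {μ : Measure α} [NormedAddCommGroup E]

theorem eLpNorm'_sum_rpow_of_pairwiseDisjoint {q : ℝ} (hq : 0 < q) {s : Finset ι}
    {f : ι → α → E} (hf : ∀ i ∈ s, AEStronglyMeasurable (f i) μ) {A : ι → Set α}
    (hA : (s : Set ι).PairwiseDisjoint A) (hfA : ∀ i ∈ s, ∀ᵐ x ∂μ, x ∉ A i → f i x = 0) :
    eLpNorm' (∑ i ∈ s, f i) q μ ^ q = ∑ i ∈ s, eLpNorm' (f i) q μ ^ q := by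
  simp_rw [← lintegral_rpow_enorm_eq_rpow_eLpNorm' hq]
  rw [← lintegral_finsetSum' s fun i hi ↦ (hf i hi).enorm.pow_const q]
  refine lintegral_congr_ae ?_
  filter_upwards [(Filter.eventually_all_finset s).2 hfA] with x hx
  rw [Finset.sum_apply]
  refine Finset.apply_sum_of_pairwise_eq_zero (g := fun y : E ↦ ‖y‖ₑ ^ q)
    (by simp [ENNReal.zero_rpow_of_pos hq]) fun i hi j hj hfi hfj ↦ ?_
  exact hA.elim_set hi hj x (not_imp_comm.1 (hx i hi) hfi) (not_imp_comm.1 (hx j hj) hfj)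

theorem Lp.norm_sum_rpow_of_pairwiseDisjoint {p : ℝ≥0∞} (hp0 : p ≠ 0) (hp : p ≠ ∞)
    {s : Finset ι} (f : ι → Lp E p μ) {A : ι → Set α} (hA : (s : Set ι).PairwiseDisjoint A)
    (hfA : ∀ i ∈ s, ∀ᵐ x ∂μ, x ∉ A i → f i x = 0) :
    ‖∑ i ∈ s, f i‖ ^ p.toReal = ∑ i ∈ s, ‖f i‖ ^ p.toReal := by
  have hq : 0 < p.toReal := ENNReal.toReal_pos hp0 hp
  have hnorm (g : Lp E p μ) :
      ‖g‖ ^ p.toReal = (eLpNorm' (g : α → E) p.toReal μ ^ p.toReal).toReal := by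
    rw [Lp.norm_def, eLpNorm_eq_eLpNorm' hp0 hp, ENNReal.toReal_rpow]
  have hfin (g : Lp E p μ) : eLpNorm' (g : α → E) p.toReal μ ^ p.toReal ≠ ∞ :=
    ENNReal.rpow_ne_top_of_nonneg hq.le <| by
      rw [← eLpNorm_eq_eLpNorm' hp0 hp]; exact Lp.eLpNorm_ne_top g
  rw [hnorm, eLpNorm'_congr_ae (Lp.coeFn_finsetSum s f),
    eLpNorm'_sum_rpow_of_pairwiseDisjoint hq (fun i _ ↦ Lp.aestronglyMeasurable (f i)) hA hfA,
    ENNReal.toReal_sum fun i _ ↦ hfin (f i)]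
  exact Finset.sum_congr rfl fun i _ ↦ (hnorm (f i)).symm

end MeasureTheory

theorem Equiv.quasiMeasurePreserving_symm {α β : Type*} [MeasurableSpace α] [MeasurableSpace β]
    {μ : Measure α} {ν : Measure β} (e : α ≃ β) (he : Measurable e.symm)
    (hnull : ∀ F : Set β, MeasurableSet F → μ (e ⁻¹' F) = 0 → ν F = 0) :
    Measure.QuasiMeasurePreserving e.symm ν μ :=
  ⟨he, Measure.AbsolutelyContinuous.mk fun F hF hF0 ↦ by
    rw [Measure.map_apply he hF]
    exact hnull _ (he hF) (by rwa [e.preimage_symm_preimage])⟩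

theorem Equiv.disjoint_preimage_iterate_symm {α : Type*} (e : α ≃ α) {A : Set α} {i j : ℕ}
    (h : Disjoint (e^[i] ⁻¹' A) (e^[j] ⁻¹' A)) :
    Disjoint (e.symm^[i] ⁻¹' A) (e.symm^[j] ⁻¹' A) := by
  have cancel (a b : ℕ) (x : α) : e^[a] (e.symm^[a + b] x) = e.symm^[b] x := by
    rw [iterate_add_apply]
    exact e.right_inv.iterate a _
  rw [Set.disjoint_left] at h ⊢
  intro x hxi hxj
  refine h (a := e.symm^[i + j] x) ?_ ?_
  · rwa [mem_preimage, cancel]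
  · rwa [mem_preimage, add_comm, cancel]

namespace MeasureTheory

variable {α E : Type*} [MeasurableSpace α] {μ : Measure α} [NormedAddCommGroup E]
  [NormedSpace ℝ E] {p : ℝ≥0∞}

theorem Lp.ae_iterate_apply_eq_zero_of_notMem {T : α → α}
    (hT : Measure.QuasiMeasurePreserving T μ μ) (w : α → ℝ) {u : Lp E p μ → Lp E p μ}
    (hu : ∀ f, ∀ᵐ x ∂μ, u f x = w x • f (T x)) {A : Set α} {f : Lp E p μ}
    (hf : ∀ᵐ x ∂μ, x ∉ A → f x = 0) (j : ℕ) :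
    ∀ᵐ x ∂μ, x ∉ T^[j] ⁻¹' A → (u^[j] f) x = 0 := by
  induction j with
  | zero => simpa using hf
  | succ j ih =>
    rw [iterate_succ_apply']
    filter_upwards [hu (u^[j] f), hT.ae ih] with x hux hx hxA
    rw [hux, hx hxA, smul_zero]

end MeasureTheory

theorem psiE_isometry_general
    {Y : Type*} [MeasurableSpace Y] (ν : Measure Y)
    (p : ℝ≥0∞) [Fact (1 ≤ p)] (hp : p ≠ ∞)
    (S : Y ≃ Y) (hS' : Measurable S.symm)
    (hnull : ∀ F : Set Y, MeasurableSet F → (ν (⇑S ⁻¹' F) = 0 ↔ ν F = 0))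
    (uS : Lp ℂ p ν ≃ₗᵢ[ℂ] Lp ℂ p ν)
    (huS : ∀ f : Lp ℂ p ν, ∀ᵐ y ∂ν,
      uS f y = ((ν.map S).rnDeriv ν y).toReal ^ (1 / p.toReal) • f (S.symm y))
    (n : ℕ) (E : Set Y) (hE : MeasurableSet E) (hEpos : 0 < ν E) (hEfin : ν E ≠ ∞)
    (hdisj : ∀ i j : Fin n, i ≠ j →
      Disjoint ((⇑S)^[(i : ℕ)] ⁻¹' E) ((⇑S)^[(j : ℕ)] ⁻¹' E)) :
    ∀ η : PiLp p (fun _ : Fin n => ℂ),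
      ‖(((ν E).toReal ^ (1 / p.toReal))⁻¹ : ℝ) •
        ∑ j : Fin n, η j • (⇑uS)^[(j : ℕ)] (indicatorConstLp p hE hEfin (1 : ℂ))‖
        = ‖η‖ := by
  intro η
  have hp0 : p ≠ 0 := (one_pos.trans_le Fact.out).ne'
  have hq : 0 < p.toReal := ENNReal.toReal_pos hp0 hp
  set g := indicatorConstLp p hE hEfin (1 : ℂ)
  set c := (ν E).toReal ^ (1 / p.toReal)
  have hc : 0 < c := Real.rpow_pos_of_pos (ENNReal.toReal_pos hEpos.ne' hEfin) _
  have hnorm (j : ℕ) : ‖uS^[j] g‖ = c := by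
    induction j with
    | zero => simp [g, c, norm_indicatorConstLp hp0 hp, measureReal_def]
    | succ j ih => rw [iterate_succ_apply', uS.norm_map, ih]
  have hsupp (j : Fin n) : ∀ᵐ y ∂ν, y ∉ S.symm^[j] ⁻¹' E → (η j • uS^[j] g) y = 0 := by
    filter_upwards [Lp.coeFn_smul (η j) (uS^[j] g),
      Lp.ae_iterate_apply_eq_zero_of_notMem
        (S.quasiMeasurePreserving_symm hS' fun F hF ↦ (hnull F hF).1) _ huS
        indicatorConstLp_coeFn_notMem j] with y hsmul hy hyE
    rw [hsmul, Pi.smul_apply, hy hyE, smul_zero]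
  have hη : ‖η‖ ^ p.toReal = ∑ j, ‖η j‖ ^ p.toReal := by
    rw [PiLp.norm_eq_sum hq, one_div, Real.rpow_inv_rpow (by positivity) hq.ne']
  have hsum : ‖∑ j, η j • uS^[j] g‖ ^ p.toReal = (‖η‖ * c) ^ p.toReal := by
    rw [Lp.norm_sum_rpow_of_pairwiseDisjoint hp0 hp _
      (fun i _ j _ hij ↦ S.disjoint_preimage_iterate_symm (hdisj i j hij)) fun j _ ↦ hsupp j]
    simp_rw [norm_smul, hnorm, Real.mul_rpow (norm_nonneg _) hc.le, ← Finset.sum_mul, hη]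
  rw [norm_smul, norm_inv, Real.norm_of_nonneg hc.le,
    (Real.rpow_left_inj (norm_nonneg _) (by positivity) hq.ne').1 hsum]
  field_simp

/-- If `E, S⁻¹(E), …, S^{-(n-1)}(E)` are pairwise disjoint and `0 < ν(E) < ∞`, then
`ψ_E(η) = ν(E)^{-1/p} ∑_j η_j u_S^j(𝟙_E)` is an isometry `ℓ^p_n → L^p(Y,ν)`. -/
theorem psiE_isometry
    {Y : Type*} [MeasurableSpace Y] (ν : Measure Y) [SigmaFinite ν]
    (p : ℝ≥0∞) [Fact (1 ≤ p)] (hp : p ≠ ∞)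
    (S : Y ≃ Y) (hS : Measurable S) (hS' : Measurable S.symm)
    (hnull : ∀ F : Set Y, MeasurableSet F → (ν (⇑S ⁻¹' F) = 0 ↔ ν F = 0))
    (uS : Lp ℂ p ν ≃ₗᵢ[ℂ] Lp ℂ p ν)
    (huS : ∀ f : Lp ℂ p ν, ∀ᵐ y ∂ν,
      uS f y = ((ν.map S).rnDeriv ν y).toReal ^ (1 / p.toReal) • f (S.symm y))
    (n : ℕ) (E : Set Y) (hE : MeasurableSet E) (hEpos : 0 < ν E) (hEfin : ν E ≠ ∞)
    (hdisj : ∀ i j : Fin n, i ≠ j →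
      Disjoint ((⇑S)^[(i : ℕ)] ⁻¹' E) ((⇑S)^[(j : ℕ)] ⁻¹' E)) :
    ∀ η : PiLp p (fun _ : Fin n => ℂ),
      ‖(((ν E).toReal ^ (1 / p.toReal))⁻¹ : ℝ) •
        ∑ j : Fin n, η j • (⇑uS)^[(j : ℕ)] (indicatorConstLp p hE hEfin (1 : ℂ))‖
        = ‖η‖ :=
  psiE_isometry_general ν p hp S hS' hnull uS huS n E hE hEpos hEfin hdisj
end

section
/- Let (Y,ν) be a σ-finite measure space with ν(Y) > 0, let p ∈ [1,∞), let S : Y → Y be an invertible measure class preserving transformation with arbitrarily long strings, let h : Y → S¹ be measurable, and let w = m_h ∘ u_S be the resulting invertible isometry of L^p(Y,ν). Then for every finitely supported f : ℤ → ℂ, the operator norm of ∑_{n} f(n) wⁿ on L^p(Y,ν) is at least the norm of the convolution operator λ_p(f) on ℓ^p(ℤ): ‖∑ₙ f(n)wⁿ‖ ≥ ‖λ_p(f)‖_{B(ℓ^p(ℤ))}. -/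
/-!
If `E` is the base of a string of length `N`, the sets `S^k E`, `k < N`, are pairwise disjoint
(they are the image under `S^(N-1)` of the string `S^(-i) E`), and `w^k` carries a unit vector
supported on `E` to a unit vector supported on `S^k E`. So on the span of these `N` vectors `w`
acts as the shift of `ℓ^p({0, …, N-1})`, isometrically, and `∑ f(n) wⁿ` acts as `λ_p(f)` on
sequences supported in a window of length `N`. Finitely supported sequences are dense in `ℓ^p(ℤ)`.
-/

open MeasureTheory
open scoped ENNReal Pointwise

theorem enorm_sum_rpow_eq_sum_of_ne_zero_unique {ι E : Type*} [NormedAddCommGroup E]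
    {q : ℝ} (hq : 0 < q) {s : Finset ι} {a : ι → E}
    (ha : ∀ i ∈ s, ∀ j ∈ s, a i ≠ 0 → a j ≠ 0 → i = j) :
    ‖∑ i ∈ s, a i‖ₑ ^ q = ∑ i ∈ s, ‖a i‖ₑ ^ q := by
  by_cases h : ∃ i ∈ s, a i ≠ 0
  · obtain ⟨i, hi, hai⟩ := h
    have hzero : ∀ j ∈ s, j ≠ i → a j = 0 := fun j hj hji =>
      by_contra fun haj => hji (ha j hj i hi haj hai)
    rw [Finset.sum_eq_single_of_mem i hi hzero, Finset.sum_eq_single_of_mem i hi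
      fun j hj hji => by simp [hzero j hj hji, hq]]
  · push Not at h
    rw [Finset.sum_eq_zero h, Finset.sum_eq_zero fun i hi => by simp [h i hi, hq]]
    simp [hq]

namespace MeasureTheory.Lp

variable {Y E : Type*} [MeasurableSpace Y] {ν : Measure Y} [NormedAddCommGroup E] {p : ℝ≥0∞}

theorem enorm_rpow_eq_lintegral (hp0 : p ≠ 0) (hp : p ≠ ∞) (u : Lp E p ν) :
    ‖u‖ₑ ^ p.toReal = ∫⁻ y, ‖u y‖ₑ ^ p.toReal ∂ν := by
  rw [enorm_def, eLpNorm_eq_eLpNorm' hp0 hp,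
    lintegral_rpow_enorm_eq_rpow_eLpNorm' (ENNReal.toReal_pos hp0 hp)]

theorem norm_sum_rpow_eq_of_disjoint (hp0 : p ≠ 0) (hp : p ≠ ∞) {ι : Type*} {s : Finset ι}
    {g : ι → Lp E p ν} {A : ι → Set Y} (hA : (s : Set ι).PairwiseDisjoint A)
    (hg : ∀ i ∈ s, ∀ᵐ y ∂ν, y ∉ A i → g i y = 0) :
    ‖∑ i ∈ s, g i‖ ^ p.toReal = ∑ i ∈ s, ‖g i‖ ^ p.toReal := by
  have hpos := ENNReal.toReal_pos hp0 hp
  suffices h : ‖∑ i ∈ s, g i‖ₑ ^ p.toReal = ∑ i ∈ s, ‖g i‖ₑ ^ p.toReal by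
    simp only [norm_def, ← enorm_def, ENNReal.toReal_rpow, h]
    exact ENNReal.toReal_sum fun i _ => ENNReal.rpow_ne_top_of_nonneg hpos.le enorm_ne_top
  have hpt : ∀ᵐ y ∂ν, ‖(∑ i ∈ s, g i) y‖ₑ ^ p.toReal = ∑ i ∈ s, ‖g i y‖ₑ ^ p.toReal := by
    filter_upwards [coeFn_fun_finsetSum s g, (ae_ball_iff s.countable_toSet).2 hg]
      with y hsum hy
    rw [hsum]
    refine enorm_sum_rpow_eq_sum_of_ne_zero_unique hpos fun i hi j hj hgi hgj => ?_
    by_contra hij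
    exact Set.disjoint_left.mp (hA hi hj hij) (not_not.mp (mt (hy i hi) hgi))
      (not_not.mp (mt (hy j hj) hgj))
  rw [enorm_rpow_eq_lintegral hp0 hp, lintegral_congr_ae hpt,
    lintegral_finsetSum' s fun i _ => (Lp.aestronglyMeasurable (g i)).enorm.pow_const _]
  simp only [enorm_rpow_eq_lintegral hp0 hp]

theorem exists_norm_eq_one_ae_eq_zero_of_notMem {𝕜 : Type*} [RCLike 𝕜] [Fact (1 ≤ p)]
    {E : Set Y} (hE : MeasurableSet E) (hE0 : ν E ≠ 0) (hEtop : ν E ≠ ∞) :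
    ∃ φ : Lp 𝕜 p ν, ‖φ‖ = 1 ∧ ∀ᵐ y ∂ν, y ∉ E → φ y = 0 := by
  set χ := indicatorConstLp p hE hEtop (1 : 𝕜)
  have hχ : χ ≠ 0 := by
    rw [← norm_pos_iff, norm_indicatorConstLp' (zero_lt_one.trans_le Fact.out).ne' hE0]
    simpa [measureReal_def] using Real.rpow_pos_of_pos (ENNReal.toReal_pos hE0 hEtop) _
  refine ⟨(‖χ‖⁻¹ : 𝕜) • χ, norm_smul_inv_norm (𝕜 := 𝕜) hχ, ?_⟩
  filter_upwards [Lp.coeFn_smul (‖χ‖⁻¹ : 𝕜) χ,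
    indicatorConstLp_coeFn_notMem (hs := hE) (hμs := hEtop) (c := (1 : 𝕜))] with y hsmul hχy hy
  rw [hsmul, Pi.smul_apply, hχy hy, smul_zero]

end MeasureTheory.Lp

namespace lp

variable {ι : Type*} {E : ι → Type*} [∀ i, NormedAddCommGroup (E i)] {p : ℝ≥0∞}

theorem norm_rpow_eq_sum_of_support_subset (hp : 0 < p.toReal) (x : lp E p)
    {s : Finset ι} (hx : ∀ i ∉ s, x i = 0) :
    ‖x‖ ^ p.toReal = ∑ i ∈ s, ‖x i‖ ^ p.toReal := by
  rw [lp.norm_rpow_eq_tsum hp]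
  exact tsum_eq_sum fun i hi => by simp [hx i hi, hp.ne']

theorem opNorm_le_of_forall_finite_support {𝕜 F : Type*} [NontriviallyNormedField 𝕜]
    [DecidableEq ι] [∀ i, NormedSpace 𝕜 (E i)] [NormedAddCommGroup F] [NormedSpace 𝕜 F]
    [Fact (1 ≤ p)] (hp : p ≠ ∞) (L : lp E p →L[𝕜] F) {C : ℝ} (hC : 0 ≤ C)
    (h : ∀ (ξ : lp E p) (s : Finset ι), (∀ i ∉ s, ξ i = 0) → ‖L ξ‖ ≤ C * ‖ξ‖) :
    ‖L‖ ≤ C := by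
  refine L.opNorm_le_bound hC fun ξ => ?_
  have hsum := lp.hasSum_single hp ξ
  refine le_of_tendsto_of_tendsto' ((L.continuous.tendsto ξ).comp hsum).norm
    (hsum.norm.const_mul C) fun s => h _ s fun j hj => ?_
  rw [lp.coeFn_sum, Finset.sum_apply]
  exact Finset.sum_eq_zero fun i hi => lp.single_apply_ne p i _ (ne_of_mem_of_not_mem hi hj).symm

end lp

theorem Equiv.Perm.image_pow_eq_image_pow_preimage {Y : Type*} (S : Equiv.Perm Y) (E : Set Y)
    {k n : ℕ} (hkn : k ≤ n) :
    ⇑(S ^ k) '' E = ⇑(S ^ n) '' (⇑(S ^ (n - k)) ⁻¹' E) := by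
  rw [← Equiv.image_symm_eq_preimage, Set.image_image]
  congr 1; ext x
  rw [← Nat.add_sub_cancel' hkn, pow_add]
  simp

theorem disjoint_image_pow_of_disjoint_preimage_iterate {Y : Type*} {S : Y ≃ Y} {E : Set Y}
    {N : ℕ}
    (hE : ∀ i j : Fin N, i ≠ j → Disjoint ((⇑S)^[(i : ℕ)] ⁻¹' E) ((⇑S)^[(j : ℕ)] ⁻¹' E))
    {k l : ℕ} (hk : k < N) (hl : l < N) (hkl : k ≠ l) :
    Disjoint (⇑(S ^ k) '' E) (⇑(S ^ l) '' E) := by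
  rw [Equiv.Perm.image_pow_eq_image_pow_preimage S E (n := N - 1) (by omega),
    Equiv.Perm.image_pow_eq_image_pow_preimage S E (n := N - 1) (by omega),
    Set.disjoint_image_iff (S ^ (N - 1)).injective]
  exact hE ⟨N - 1 - k, by omega⟩ ⟨N - 1 - l, by omega⟩ (by simp [Fin.ext_iff]; omega)

section WeightedComposition

variable {Y : Type*} [MeasurableSpace Y] {ν : Measure Y} {p : ℝ≥0∞} [Fact (1 ≤ p)]
  {S : Y ≃ Y} {w : Lp ℂ p ν ≃ₗᵢ[ℂ] Lp ℂ p ν} {a : Y → ℂ}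

theorem Equiv.quasiMeasurePreserving_symm_of_preimage_null (hS' : Measurable S.symm)
    (hnull : ∀ F : Set Y, MeasurableSet F → (ν (⇑S ⁻¹' F) = 0 ↔ ν F = 0)) :
    Measure.QuasiMeasurePreserving S.symm ν ν := by
  refine ⟨hS', Measure.AbsolutelyContinuous.mk fun F hF hF0 => ?_⟩
  rw [Measure.map_apply hS' hF, ← hnull _ (hS' hF), S.preimage_symm_preimage]
  exact hF0

theorem ae_eq_zero_of_notMem_image_pow (hS : Measure.QuasiMeasurePreserving S.symm ν ν)
    (hw : ∀ g : Lp ℂ p ν, ∀ᵐ y ∂ν, w g y = a y * g (S.symm y))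
    {g : Lp ℂ p ν} {A : Set Y} (hg : ∀ᵐ y ∂ν, y ∉ A → g y = 0) (k : ℕ) :
    ∀ᵐ y ∂ν, y ∉ ⇑(S ^ k) '' A → (w ^ k) g y = 0 := by
  induction k with
  | zero => simpa using hg
  | succ k ih =>
    filter_upwards [hw ((w ^ k) g), hS.ae ih] with y hwy hy hyA
    rw [pow_succ', LinearIsometryEquiv.coe_mul, Function.comp_apply, hwy, hy, mul_zero]
    rintro ⟨x, hx, hxy⟩
    exact hyA ⟨x, hx, by rw [pow_succ', Equiv.Perm.coe_mul, Function.comp_apply, hxy,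
      Equiv.apply_symm_apply]⟩

theorem exists_norm_sum_smul_zpow_rpow_eq (hp : p ≠ ∞)
    (hS : Measure.QuasiMeasurePreserving S.symm ν ν)
    (hw : ∀ g : Lp ℂ p ν, ∀ᵐ y ∂ν, w g y = a y * g (S.symm y))
    (hstrings : ∀ n : ℕ, ∃ E : Set Y, MeasurableSet E ∧ 0 < ν E ∧ ν E ≠ ∞ ∧
      ∀ i j : Fin n, i ≠ j → Disjoint ((⇑S)^[(i : ℕ)] ⁻¹' E) ((⇑S)^[(j : ℕ)] ⁻¹' E))
    (U : Finset ℤ) :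
    ∃ φ : Lp ℂ p ν, ∀ c : ℤ → ℂ,
      ‖∑ m ∈ U, c m • (w ^ m) φ‖ ^ p.toReal = ∑ m ∈ U, ‖c m‖ ^ p.toReal := by
  obtain ⟨a₀, ha₀⟩ := U.bddBelow
  obtain ⟨b, hb⟩ := U.bddAbove
  obtain ⟨E, hE, hE0, hEtop, hEdisj⟩ := hstrings ((b - a₀).toNat + 1)
  obtain ⟨φ, hφ1, hφE⟩ :=
    Lp.exists_norm_eq_one_ae_eq_zero_of_notMem (𝕜 := ℂ) (p := p) hE hE0.ne' hEtop
  set κ : ℤ → ℕ := fun m => (m - a₀).toNat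
  have hκ : ∀ m ∈ U, (κ m : ℤ) = m - a₀ := fun m hm => Int.toNat_of_nonneg (by linarith [ha₀ hm])
  -- `w ^ (-a₀)` moves the window `U` into `[0, N)`, where the supports `S^k E` are disjoint.
  have horbit : ∀ m ∈ U, (w ^ m) ((w ^ (-a₀)) φ) = (w ^ κ m) φ := fun m hm => by
    rw [← zpow_natCast, hκ m hm, sub_eq_add_neg, zpow_add, LinearIsometryEquiv.coe_mul,
      Function.comp_apply]
  refine ⟨(w ^ (-a₀)) φ, fun c => ?_⟩
  rw [Finset.sum_congr rfl fun m hm => by rw [horbit m hm],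
    Lp.norm_sum_rpow_eq_of_disjoint (zero_lt_one.trans_le Fact.out).ne' hp
      (A := fun m => ⇑(S ^ κ m) '' E)]
  · refine Finset.sum_congr rfl fun m _ => ?_
    rw [norm_smul, LinearIsometryEquiv.norm_map, hφ1, mul_one]
  · intro m hm m' hm' hmm'
    have := hκ m hm; have := hκ m' hm'; have := hb hm; have := hb hm'
    exact disjoint_image_pow_of_disjoint_preimage_iterate hEdisj (by omega) (by omega) (by omega)
  · intro m _
    filter_upwards [Lp.coeFn_smul (c m) ((w ^ κ m) φ),
      ae_eq_zero_of_notMem_image_pow hS hw hφE (κ m)] with y hsmul hy hyE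
    rw [hsmul, Pi.smul_apply, hy hyE, smul_zero]

end WeightedComposition

def finsuppConv (f : ℤ →₀ ℂ) (ξ : ℤ → ℂ) (m : ℤ) : ℂ :=
  ∑ n ∈ f.support, f n * ξ (m - n)

theorem finsuppConv_eq_zero_of_notMem {f : ℤ →₀ ℂ} {ξ : ℤ → ℂ} {J : Finset ℤ}
    (hξ : ∀ m ∉ J, ξ m = 0) {m : ℤ} (hm : m ∉ f.support + J) : finsuppConv f ξ m = 0 :=
  Finset.sum_eq_zero fun n hn => by
    rw [hξ (m - n) fun h => hm (by simpa using Finset.add_mem_add hn h), mul_zero]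

section Orbit

variable {X : Type*} [NormedAddCommGroup X] [NormedSpace ℂ X] (w : X ≃ₗᵢ[ℂ] X) (f : ℤ →₀ ℂ)

theorem apply_sum_smul_zpow_eq_sum_finsuppConv_smul {ξ : ℤ → ℂ} {J U : Finset ℤ}
    (hξ : ∀ m ∉ J, ξ m = 0) (hJU : J ⊆ U) (hFJU : f.support + J ⊆ U) (φ : X) :
    (∑ n ∈ f.support, f n • ((w ^ n).toContinuousLinearEquiv : X →L[ℂ] X))
        (∑ m ∈ U, ξ m • (w ^ m) φ) = ∑ m ∈ U, finsuppConv f ξ m • (w ^ m) φ := by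
  have hshift : ∀ n ∈ f.support,
      ∑ j ∈ U, ξ j • (w ^ (n + j)) φ = ∑ m ∈ U, ξ (m - n) • (w ^ m) φ := by
    intro n hn
    have hmap : J.map (addLeftEmbedding n) ⊆ U := fun m hm => by
      obtain ⟨j, hj, rfl⟩ := Finset.mem_map.1 hm
      exact hFJU (Finset.add_mem_add hn hj)
    rw [← Finset.sum_subset hJU fun j _ hj => by rw [hξ j hj, zero_smul],
      ← Finset.sum_subset hmap fun m _ hm => ?_, Finset.sum_map]
    · simp
    · rw [hξ (m - n) fun h => hm (Finset.mem_map.2 ⟨m - n, h, by simp⟩), zero_smul]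
  have hpow : ∀ n j : ℤ, (w ^ n) ((w ^ j) φ) = (w ^ (n + j)) φ := fun n j => by
    rw [zpow_add, LinearIsometryEquiv.coe_mul, Function.comp_apply]
  rw [sum_apply]
  simp only [smul_apply, ContinuousLinearEquiv.coe_coe,
    LinearIsometryEquiv.coe_toContinuousLinearEquiv]
  simp only [map_sum, map_smul, hpow]
  rw [Finset.sum_congr rfl fun n hn => congrArg (f n • ·) (hshift n hn)]
  simp only [finsuppConv, Finset.smul_sum, Finset.sum_smul, smul_smul]
  exact Finset.sum_comm

theorem sum_norm_finsuppConv_rpow_le {ξ : ℤ → ℂ} {J U : Finset ℤ}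
    (hξ : ∀ m ∉ J, ξ m = 0) (hJU : J ⊆ U) (hFJU : f.support + J ⊆ U) {q : ℝ} (hq : 0 < q)
    {φ : X} (hφ : ∀ c : ℤ → ℂ, ‖∑ m ∈ U, c m • (w ^ m) φ‖ ^ q = ∑ m ∈ U, ‖c m‖ ^ q) :
    ∑ m ∈ U, ‖finsuppConv f ξ m‖ ^ q ≤
      ‖∑ n ∈ f.support, f n • ((w ^ n).toContinuousLinearEquiv : X →L[ℂ] X)‖ ^ q *
        ∑ m ∈ U, ‖ξ m‖ ^ q := by
  set T := ∑ n ∈ f.support, f n • ((w ^ n).toContinuousLinearEquiv : X →L[ℂ] X)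
  set g := ∑ m ∈ U, ξ m • (w ^ m) φ
  calc ∑ m ∈ U, ‖finsuppConv f ξ m‖ ^ q
      = ‖T g‖ ^ q := by rw [apply_sum_smul_zpow_eq_sum_finsuppConv_smul w f hξ hJU hFJU, hφ]
    _ ≤ (‖T‖ * ‖g‖) ^ q := Real.rpow_le_rpow (norm_nonneg _) (T.le_opNorm g) hq.le
    _ = ‖T‖ ^ q * ∑ m ∈ U, ‖ξ m‖ ^ q := by rw [Real.mul_rpow (norm_nonneg _) (norm_nonneg _), hφ]

end Orbit

theorem norm_dominates_convolution_norm_general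
    {Y : Type*} [MeasurableSpace Y] (ν : Measure Y)
    (p : ℝ≥0∞) [Fact (1 ≤ p)] (hp : p ≠ ∞)
    (S : Y ≃ Y) (hS' : Measurable S.symm)
    (hnull : ∀ F : Set Y, MeasurableSet F → (ν (⇑S ⁻¹' F) = 0 ↔ ν F = 0))
    (hstrings : ∀ n : ℕ, ∃ E : Set Y, MeasurableSet E ∧ 0 < ν E ∧ ν E ≠ ∞ ∧
      ∀ i j : Fin n, i ≠ j →
        Disjoint ((⇑S)^[(i : ℕ)] ⁻¹' E) ((⇑S)^[(j : ℕ)] ⁻¹' E))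
    (h : Y → ℂ)
    (w : Lp ℂ p ν ≃ₗᵢ[ℂ] Lp ℂ p ν)
    (hw : ∀ g : Lp ℂ p ν, ∀ᵐ y ∂ν,
      w g y = h y * (((ν.map S).rnDeriv ν y).toReal ^ (1 / p.toReal) • g (S.symm y)))
    (f : ℤ →₀ ℂ)
    (L : lp (fun _ : ℤ => ℂ) p →L[ℂ] lp (fun _ : ℤ => ℂ) p)
    (hL : ∀ (ξ : lp (fun _ : ℤ => ℂ) p) (m : ℤ),
      L ξ m = ∑' n : ℤ, f n * ξ (m - n)) :
    ‖L‖ ≤ ‖∑ n ∈ f.support, f n •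
      (((w ^ n).toContinuousLinearEquiv :
        Lp ℂ p ν ≃L[ℂ] Lp ℂ p ν) : Lp ℂ p ν →L[ℂ] Lp ℂ p ν)‖ := by
  classical
  have hq : 0 < p.toReal := ENNReal.toReal_pos (zero_lt_one.trans_le Fact.out).ne' hp
  have hw' (g : Lp ℂ p ν) : ∀ᵐ y ∂ν, w g y =
      (h y * (((ν.map S).rnDeriv ν y).toReal ^ (1 / p.toReal) : ℝ)) * g (S.symm y) := by
    filter_upwards [hw g] with y hy
    rw [hy, Complex.real_smul, mul_assoc]
  have hLconv (ξ : lp (fun _ : ℤ => ℂ) p) (m : ℤ) : L ξ m = finsuppConv f ξ m :=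
    (hL ξ m).trans <| tsum_eq_sum fun n hn => by rw [Finsupp.notMem_support_iff.1 hn, zero_mul]
  refine lp.opNorm_le_of_forall_finite_support hp L (norm_nonneg _) fun ξ J hξ => ?_
  set U := J ∪ (f.support + J)
  obtain ⟨φ, hφ⟩ := exists_norm_sum_smul_zpow_rpow_eq hp
    (S.quasiMeasurePreserving_symm_of_preimage_null hS' hnull) hw' hstrings U
  have hLU := lp.norm_rpow_eq_sum_of_support_subset hq (L ξ) (s := U) fun m hm => by
    rw [hLconv]
    exact finsuppConv_eq_zero_of_notMem hξ fun hmem => hm (Finset.mem_union_right _ hmem)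
  have hξU := lp.norm_rpow_eq_sum_of_support_subset hq ξ (s := U) fun m hm =>
    hξ m fun hmem => hm (Finset.mem_union_left _ hmem)
  refine (Real.rpow_le_rpow_iff (norm_nonneg _) (by positivity) hq).1 ?_
  rw [Real.mul_rpow (norm_nonneg _) (norm_nonneg _), hLU, hξU]
  simp only [hLconv]
  exact sum_norm_finsuppConv_rpow_le w f hξ Finset.subset_union_left Finset.subset_union_right
    hq hφ

/-- If `w = m_h ∘ u_S` where `S` has arbitrarily long strings, then for every finitely
supported `f : ℤ → ℂ`, the operator `∑ₙ f(n) wⁿ` on `L^p(Y,ν)` dominates in norm the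
convolution operator `λ_p(f)` on `ℓ^p(ℤ)`. -/
theorem norm_dominates_convolution_norm
    {Y : Type*} [MeasurableSpace Y] (ν : Measure Y) [SigmaFinite ν]
    (hY : ν Set.univ ≠ 0)
    (p : ℝ≥0∞) [Fact (1 ≤ p)] (hp : p ≠ ∞)
    (S : Y ≃ Y) (hS : Measurable S) (hS' : Measurable S.symm)
    (hnull : ∀ F : Set Y, MeasurableSet F → (ν (⇑S ⁻¹' F) = 0 ↔ ν F = 0))
    (hstrings : ∀ n : ℕ, ∃ E : Set Y, MeasurableSet E ∧ 0 < ν E ∧ ν E ≠ ∞ ∧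
      ∀ i j : Fin n, i ≠ j →
        Disjoint ((⇑S)^[(i : ℕ)] ⁻¹' E) ((⇑S)^[(j : ℕ)] ⁻¹' E))
    (h : Y → ℂ) (hmeas : Measurable h) (hmod : ∀ y, ‖h y‖ = 1)
    (w : Lp ℂ p ν ≃ₗᵢ[ℂ] Lp ℂ p ν)
    (hw : ∀ g : Lp ℂ p ν, ∀ᵐ y ∂ν,
      w g y = h y * (((ν.map S).rnDeriv ν y).toReal ^ (1 / p.toReal) • g (S.symm y)))
    (f : ℤ →₀ ℂ)
    (L : lp (fun _ : ℤ => ℂ) p →L[ℂ] lp (fun _ : ℤ => ℂ) p)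
    (hL : ∀ (ξ : lp (fun _ : ℤ => ℂ) p) (m : ℤ),
      L ξ m = ∑' n : ℤ, f n * ξ (m - n)) :
    ‖L‖ ≤ ‖∑ n ∈ f.support, f n •
      (((w ^ n).toContinuousLinearEquiv :
        Lp ℂ p ν ≃L[ℂ] Lp ℂ p ν) : Lp ℂ p ν →L[ℂ] Lp ℂ p ν)‖ :=
  norm_dominates_convolution_norm_general ν p hp S hS' hnull hstrings h w hw f L hL
end
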